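/- arXiv:1202.4120 — 2 statements merged into one kernel-verified Lean document; each statement's English description precedes it below -/
import Mathlib

section
/- Let B = [[u, B'],[c, w*]] ∈ U(n). Then B' is a normal matrix if and only if the vectors u and w are proportional with a constant of proportionality of modulus 1 (or both zero). -/
open Matrix

/-- The block matrix `B = [[u, B'],[c, w*]]` acting on `ℂⁿ = ℂ ⊕ ℂ^{n-1}`:
first column `(u; c)`, upper-right corner `B'`, bottom row `(c, w*)`. -/
noncomputable def blockB {m : ℕ} (u : Fin m → ℂ) (B' : Matrix (Fin m) (Fin m) ℂ)
    (c : ℂ) (w : Fin m → ℂ) : Matrix (Fin (m + 1)) (Fin (m + 1)) ℂ :=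
  fun i j =>
    Fin.cases (Fin.lastCases c u i)
      (fun j' => Fin.lastCases ((starRingEnd ℂ) (w j')) (fun i' => B' i' j') i) j

/-!
Unitarity of `B`, read off on the lower-right block of `BᴴB` and the upper-left block of `BBᴴ`,
gives `B'ᴴB' = 1 - w w*` and `B'B'ᴴ = 1 - u u*`. So `B'` is normal iff `w w* = u u*`, and two
rank-one matrices `w w*`, `u u*` agree iff `w = t u` with `|t| = 1`: compare the diagonals for
`|wₐ| = |uₐ|`, then take `t = wₐ / uₐ` at a coordinate where `uₐ ≠ 0`.
-/

section RankOne

variable {𝕜 ι : Type*} [RCLike 𝕜]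

theorem vecMulVec_star_self_eq_iff (u w : ι → 𝕜) :
    vecMulVec w (star w) = vecMulVec u (star u) ↔ ∃ t : 𝕜, ‖t‖ = 1 ∧ w = t • u := by
  constructor
  · intro h
    have hentry (a b : ι) : w a * star (w b) = u a * star (u b) := by
      simpa only [vecMulVec_apply, Pi.star_apply] using congrFun (congrFun h a) b
    have hnorm (a : ι) : ‖w a‖ = ‖u a‖ := by
      have := hentry a a
      rw [RCLike.star_def, RCLike.mul_conj, RCLike.mul_conj] at this
      exact (pow_left_inj₀ (norm_nonneg _) (norm_nonneg _) two_ne_zero).1 (by exact_mod_cast this)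
    rcases eq_or_ne u 0 with hu | hu
    · refine ⟨1, norm_one, funext fun a => ?_⟩
      rw [one_smul, hu, Pi.zero_apply, ← norm_eq_zero, hnorm, hu, Pi.zero_apply, norm_zero]
    · obtain ⟨a, ha⟩ := Function.ne_iff.1 hu
      have hwa : star (w a) ≠ 0 := by
        rw [star_ne_zero, ← norm_ne_zero_iff, hnorm]
        exact norm_ne_zero_iff.2 ha
      refine ⟨w a / u a, by rw [norm_div, hnorm, div_self (norm_ne_zero_iff.2 ha)], ?_⟩
      funext b
      rw [Pi.smul_apply, smul_eq_mul, div_mul_eq_mul_div, eq_div_iff ha]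
      apply mul_left_cancel₀ hwa
      linear_combination u a * hentry b a - u b * hentry a a
  · rintro ⟨t, ht, rfl⟩
    have htt : t * star t = 1 := by
      rw [RCLike.star_def, RCLike.mul_conj, ht]
      norm_num
    rw [star_smul, smul_vecMulVec, vecMulVec_smul, smul_smul, htt, one_smul]

end RankOne

section BlockB

variable {m : ℕ} (u w : Fin m → ℂ) (B' : Matrix (Fin m) (Fin m) ℂ) (c : ℂ)

theorem blockB_conjTranspose_mul_self_submatrix_succ :
    ((blockB u B' c w)ᴴ * blockB u B' c w).submatrix Fin.succ Fin.succ
      = B'ᴴ * B' + vecMulVec w (star w) := by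
  ext a b
  simp [mul_apply, Fin.sum_univ_castSucc, blockB, vecMulVec_apply]

theorem blockB_mul_conjTranspose_self_submatrix_castSucc :
    (blockB u B' c w * (blockB u B' c w)ᴴ).submatrix Fin.castSucc Fin.castSucc
      = B' * B'ᴴ + vecMulVec u (star u) := by
  ext a b
  simp [mul_apply, Fin.sum_univ_succ, blockB, vecMulVec_apply, add_comm]

end BlockB

/-- For `B = [[u, B'],[c, w*]] ∈ U(n)`: `B'` is normal iff `u` and `w` are proportional
with a constant of proportionality of modulus one (or both zero). -/
theorem stmt_8 {m : ℕ} (u w : Fin m → ℂ) (B' : Matrix (Fin m) (Fin m) ℂ) (c : ℂ)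
    (hB : blockB u B' c w ∈ Matrix.unitaryGroup (Fin (m + 1)) ℂ) :
    B'ᴴ * B' = B' * B'ᴴ ↔ ∃ t : ℂ, ‖t‖ = 1 ∧ w = t • u := by
  have hw : B'ᴴ * B' + vecMulVec w (star w) = 1 := by
    rw [← blockB_conjTranspose_mul_self_submatrix_succ u w B' c, ← star_eq_conjTranspose,
      hB.1, submatrix_one _ (Fin.succ_injective _)]
  have hu : B' * B'ᴴ + vecMulVec u (star u) = 1 := by
    rw [← blockB_mul_conjTranspose_self_submatrix_castSucc u w B' c, ← star_eq_conjTranspose,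
      hB.2, submatrix_one _ (Fin.castSucc_injective _)]
  rw [← vecMulVec_star_self_eq_iff, eq_sub_of_add_eq hw, eq_sub_of_add_eq hu, sub_right_inj]
end

section
/- Let B = [[u, B'],[c, w*]] ∈ U(n) and suppose ζ ∈ ℂ^{n−1} satisfies B'ζ = ζ. Then, regarding B as acting on ℂⁿ = ℂ ⊕ ℂ^{n−1}, we have ⟨u, ζ⟩ = 0 and ⟨w, ζ⟩ = 0. -/
/-!
Put `ξ = (0, ζ)` and `e₀ = (1, 0)`. Since `B'ζ = ζ`, we get `Bξ = (ζ; ⟨w, ζ⟩)` and `Be₀ = (u; c)`.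
As `B` preserves inner products, `‖ζ‖² + |⟨w, ζ⟩|² = ‖Bξ‖² = ‖ξ‖² = ‖ζ‖²`, so `⟨w, ζ⟩ = 0`,
and then `⟨u, ζ⟩ = ⟨Be₀, Bξ⟩ = ⟨e₀, ξ⟩ = 0`.
-/

open Matrix

namespace Matrix

theorem star_mulVec_dotProduct_mulVec_of_star_mul_self {n R : Type*} [Fintype n] [DecidableEq n]
    [CommRing R] [StarRing R] {U : Matrix n n R} (hU : star U * U = 1) (x y : n → R) :
    star (U *ᵥ x) ⬝ᵥ (U *ᵥ y) = star x ⬝ᵥ y := by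
  rw [star_mulVec, dotProduct_mulVec, vecMul_vecMul, ← star_eq_conjTranspose, hU, vecMul_one]

theorem star_lastCases_dotProduct_lastCases {m : ℕ} {R : Type*} [CommSemiring R] [StarRing R]
    (a b : R) (x y : Fin m → R) :
    star (Fin.lastCases a x : Fin (m + 1) → R) ⬝ᵥ Fin.lastCases b y = star x ⬝ᵥ y + star a * b := by
  simp [dotProduct, Fin.sum_univ_castSucc]

theorem star_cons_dotProduct_cons {m : ℕ} {R : Type*} [CommSemiring R] [StarRing R]
    (a b : R) (x y : Fin m → R) :
    star (Fin.cons a x : Fin (m + 1) → R) ⬝ᵥ Fin.cons b y = star a * b + star x ⬝ᵥ y := by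
  simp [dotProduct, Fin.sum_univ_succ]

end Matrix

section blockB

variable {m : ℕ} (u w : Fin m → ℂ) (B' : Matrix (Fin m) (Fin m) ℂ) (c : ℂ)

theorem blockB_mulVec_cons_zero (ζ : Fin m → ℂ) :
    blockB u B' c w *ᵥ Fin.cons 0 ζ = Fin.lastCases (star w ⬝ᵥ ζ) (B' *ᵥ ζ) := by
  ext i
  induction i using Fin.lastCases <;> simp [mulVec, dotProduct, Fin.sum_univ_succ, blockB]

theorem blockB_mulVec_cons_one_zero :
    blockB u B' c w *ᵥ Fin.cons 1 0 = Fin.lastCases c u := by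
  ext i
  induction i using Fin.lastCases <;> simp [mulVec, dotProduct, Fin.sum_univ_succ, blockB]

end blockB

/-- For `B = [[u, B'],[c, w*]] ∈ U(n)`: if `B'ζ = ζ` then `⟨u, ζ⟩ = 0` and `⟨w, ζ⟩ = 0`. -/
theorem stmt_9 {m : ℕ} (u w : Fin m → ℂ) (B' : Matrix (Fin m) (Fin m) ℂ) (c : ℂ)
    (hB : blockB u B' c w ∈ Matrix.unitaryGroup (Fin (m + 1)) ℂ)
    (ζ : Fin m → ℂ) (hζ : B' *ᵥ ζ = ζ) :
    star u ⬝ᵥ ζ = 0 ∧ star w ⬝ᵥ ζ = 0 := by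
  have hU : star (blockB u B' c w) * blockB u B' c w = 1 := hB.1
  have hξ := blockB_mulVec_cons_zero u w B' c ζ
  rw [hζ] at hξ
  have hw : star w ⬝ᵥ ζ = 0 := by
    have hnorm := star_mulVec_dotProduct_mulVec_of_star_mul_self hU (Fin.cons 0 ζ) (Fin.cons 0 ζ)
    rw [hξ, star_lastCases_dotProduct_lastCases, star_cons_dotProduct_cons] at hnorm
    simpa using hnorm
  have horth := star_mulVec_dotProduct_mulVec_of_star_mul_self hU (Fin.cons 1 0) (Fin.cons 0 ζ)
  rw [hξ, blockB_mulVec_cons_one_zero, star_lastCases_dotProduct_lastCases,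
    star_cons_dotProduct_cons] at horth
  simpa [hw] using horth
end
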